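/- For every integer n ≥ 36, f(n)² − f(n−5)·f(n+5) > 0. -/

import Mathlib

/-- `f n` is the number of relatively prime subsets of `{1, 2, ..., n}`,
i.e. subsets `A` with `gcd A = 1` (such subsets are automatically nonempty). -/
def f (n : ℕ) : ℕ :=
  ((Finset.Icc 1 n).powerset.filter (fun A => A.gcd id = 1)).card

/-!
A subset of `{1, ..., m}` that is not relatively prime consists of multiples of some `d ≥ 2`.
The even subsets alone number `2 ^ ⌊m/2⌋`, and all the others at most `m * 2 ^ ⌊m/3⌋`, so
`2 ^ m - 2 ^ ⌊m/2⌋ - m * 2 ^ ⌊m/3⌋ ≤ f m ≤ 2 ^ m - 2 ^ ⌊m/2⌋`. In `f n ^ 2 - f (n-5) * f (n+5)`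
the leading terms `4 ^ n` cancel, and the terms of order `2 ^ n * 2 ^ ⌊n/2⌋` leave a positive
margin, which for `n ≥ 36` beats the error term since `n * 2 ^ ⌊n/3⌋ < 2 ^ ⌊n/2⌋`.
-/

open Finset

lemma card_filter_dvd_Icc_one (m d : ℕ) : #{a ∈ Icc 1 m | d ∣ a} = m / d := by
  rw [← Nat.Ioc_filter_dvd_card_eq_div, ← Icc_add_one_left_eq_Ioc, zero_add]

lemma f_add_two_pow_half_le (m : ℕ) : f m + 2 ^ (m / 2) ≤ 2 ^ m := by
  have hdisj : Disjoint {A ∈ (Icc 1 m).powerset | A.gcd id = 1}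
      {a ∈ Icc 1 m | 2 ∣ a}.powerset := by
    refine disjoint_left.2 fun A hA hA₂ => ?_
    have h₂ : 2 ∣ A.gcd id := dvd_gcd fun a ha => (mem_filter.1 (mem_powerset.1 hA₂ ha)).2
    rw [(mem_filter.1 hA).2] at h₂
    exact absurd h₂ (by norm_num)
  calc f m + 2 ^ (m / 2)
      = #({A ∈ (Icc 1 m).powerset | A.gcd id = 1} ∪ {a ∈ Icc 1 m | 2 ∣ a}.powerset) := by
        rw [card_union_of_disjoint hdisj, card_powerset, card_filter_dvd_Icc_one, f]
    _ ≤ #(Icc 1 m).powerset :=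
        card_le_card (union_subset (filter_subset _ _) (powerset_mono.2 (filter_subset _ _)))
    _ = 2 ^ m := by simp

lemma card_filter_gcd_ne_one_le (m : ℕ) (hm : 2 ≤ m) :
    #{A ∈ (Icc 1 m).powerset | A.gcd id ≠ 1} ≤ ∑ d ∈ Icc 2 m, 2 ^ (m / d) := by
  calc _ ≤ #((Icc 2 m).biUnion fun d => {a ∈ Icc 1 m | d ∣ a}.powerset) := card_le_card ?_
    _ ≤ ∑ d ∈ Icc 2 m, #{a ∈ Icc 1 m | d ∣ a}.powerset := card_biUnion_le
    _ = ∑ d ∈ Icc 2 m, 2 ^ (m / d) := by simp only [card_powerset, card_filter_dvd_Icc_one]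
  intro A hA
  obtain ⟨hAm, hgcd⟩ := mem_filter.1 hA
  rw [mem_powerset] at hAm
  rw [mem_biUnion]
  rcases A.eq_empty_or_nonempty with rfl | ⟨a, ha⟩
  · exact ⟨2, mem_Icc.2 ⟨le_rfl, hm⟩, empty_mem_powerset _⟩
  · refine ⟨A.gcd id, ?_, mem_powerset.2 fun b hb => mem_filter.2 ⟨hAm hb, gcd_dvd hb⟩⟩
    have ha₁ := mem_Icc.1 (hAm ha)
    have hpos : 0 < A.gcd id := Nat.pos_of_dvd_of_pos (gcd_dvd ha) ha₁.1
    have hle : A.gcd id ≤ a := Nat.le_of_dvd ha₁.1 (gcd_dvd ha)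
    exact mem_Icc.2 ⟨by omega, by omega⟩

lemma sum_two_pow_div_le (m : ℕ) :
    ∑ d ∈ Icc 2 m, 2 ^ (m / d) ≤ 2 ^ (m / 2) + m * 2 ^ (m / 3) := by
  calc ∑ d ∈ Icc 2 m, 2 ^ (m / d) ≤ ∑ d ∈ insert 2 (Icc 3 m), 2 ^ (m / d) :=
        sum_le_sum_of_subset fun d hd => by simp only [mem_insert, mem_Icc] at hd ⊢; omega
    _ = 2 ^ (m / 2) + ∑ d ∈ Icc 3 m, 2 ^ (m / d) := sum_insert (by simp)
    _ ≤ 2 ^ (m / 2) + #(Icc 3 m) • 2 ^ (m / 3) := by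
        gcongr
        exact sum_le_card_nsmul _ _ _ fun d hd =>
          Nat.pow_le_pow_right two_pos (Nat.div_le_div_left (mem_Icc.1 hd).1 three_pos)
    _ ≤ 2 ^ (m / 2) + m * 2 ^ (m / 3) := by
        rw [Nat.card_Icc, smul_eq_mul]
        gcongr
        omega

lemma two_pow_le_f_add (m : ℕ) (hm : 2 ≤ m) :
    2 ^ m ≤ f m + 2 ^ (m / 2) + m * 2 ^ (m / 3) := by
  have hsplit := card_filter_add_card_filter_not (s := (Icc 1 m).powerset)
    (p := fun A => A.gcd id = 1)
  rw [card_powerset, Nat.card_Icc, add_tsub_cancel_right] at hsplit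
  have hrest : #{A ∈ (Icc 1 m).powerset | ¬A.gcd id = 1} ≤ 2 ^ (m / 2) + m * 2 ^ (m / 3) :=
    (card_filter_gcd_ne_one_le m hm).trans (sum_two_pow_div_le m)
  rw [f]
  omega

lemma six_mul_add_five_lt_two_pow (q : ℕ) (hq : 6 ≤ q) : 6 * q + 5 < 2 ^ q := by
  induction q, hq using Nat.le_induction with
  | base => norm_num
  | succ q hq ih =>
    have h₆ : 6 ≤ 2 ^ q := le_trans (by norm_num) (Nat.pow_le_pow_right two_pos hq)
    rw [pow_succ]
    omega

lemma mul_two_pow_div_three_lt (n : ℕ) (hn : 36 ≤ n) : n * 2 ^ (n / 3) < 2 ^ (n / 2) := by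
  have hn₆ : n < 2 ^ (n / 6) := by
    have := six_mul_add_five_lt_two_pow (n / 6) (by omega)
    omega
  calc n * 2 ^ (n / 3) < 2 ^ (n / 6) * 2 ^ (n / 3) := by gcongr
    _ = 2 ^ (n / 6 + n / 3) := (pow_add 2 _ _).symm
    _ ≤ 2 ^ (n / 2) := Nat.pow_le_pow_right two_pos (by omega)

lemma f_le_two_pow_sub (m : ℕ) : (f m : ℤ) ≤ 2 ^ m - 2 ^ (m / 2) := by
  rw [le_sub_iff_add_le]
  exact_mod_cast f_add_two_pow_half_le m

lemma two_pow_sub_two_mul_lt_f (n : ℕ) (hn : 36 ≤ n) : (2 : ℤ) ^ n - 2 * 2 ^ (n / 2) < f n := by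
  have := two_pow_le_f_add n (by omega)
  have := mul_two_pow_div_three_lt n hn
  rw [sub_lt_iff_lt_add]
  exact_mod_cast (by omega : 2 ^ n < f n + 2 * 2 ^ (n / 2))

lemma two_pow_sub_mul_two_pow_sub_le (m : ℕ) :
    ((2 : ℤ) ^ m - 2 ^ (m / 2)) * (2 ^ (m + 10) - 2 ^ ((m + 10) / 2)) ≤
      (2 ^ (m + 5) - 2 * 2 ^ ((m + 5) / 2)) ^ 2 := by
  have hE_shift : (2 : ℤ) ^ ((m + 10) / 2) = 32 * 2 ^ (m / 2) := by
    rw [show (m + 10) / 2 = m / 2 + 5 by omega, pow_add]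
    ring
  have hE_le : (2 : ℤ) ^ ((m + 5) / 2) ≤ 8 * 2 ^ (m / 2) :=
    calc (2 : ℤ) ^ ((m + 5) / 2) ≤ 2 ^ (m / 2 + 3) := pow_le_pow_right₀ one_le_two (by omega)
      _ = 8 * 2 ^ (m / 2) := by rw [pow_add]; ring
  have hE_ge : 4 * 2 ^ (m / 2) ≤ (2 : ℤ) ^ ((m + 5) / 2) :=
    calc 4 * 2 ^ (m / 2) = (2 : ℤ) ^ (m / 2 + 2) := by rw [pow_add]; ring
      _ ≤ 2 ^ ((m + 5) / 2) := pow_le_pow_right₀ one_le_two (by omega)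
  rw [hE_shift, pow_add 2 m 10, pow_add 2 m 5]
  -- with `x = 2 ^ m`, `y = 2 ^ ⌊m/2⌋`, `E = 2 ^ ⌊(m+5)/2⌋ ∈ [4y, 8y]`, the difference of the
  -- two sides is `128 x (8y - E) + 32 x y + 4 E ^ 2 - 32 y ^ 2`
  have hx : (0 : ℤ) ≤ 2 ^ m := by positivity
  have hy : (0 : ℤ) ≤ 2 ^ (m / 2) := by positivity
  nlinarith [mul_nonneg hx (sub_nonneg.2 hE_le), mul_le_mul hE_ge hE_ge (by positivity)
    (hy.trans (by linarith)), mul_nonneg hx hy, mul_nonneg hy hy]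

theorem stmt_7 (n : ℕ) (hn : 36 ≤ n) :
    (f n : ℤ) ^ 2 - f (n - 5) * f (n + 5) > 0 := by
  have hlow := two_pow_sub_two_mul_lt_f n hn
  obtain ⟨m, rfl⟩ : ∃ m, n = m + 5 := ⟨n - 5, by omega⟩
  have hbase : (0 : ℤ) ≤ 2 ^ (m + 5) - 2 * 2 ^ ((m + 5) / 2) := by
    rw [sub_nonneg, ← pow_succ']
    exact pow_le_pow_right₀ one_le_two (by omega)
  rw [Nat.add_sub_cancel, add_assoc, gt_iff_lt, sub_pos]
  calc (f m : ℤ) * f (m + 10)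
      ≤ (2 ^ m - 2 ^ (m / 2)) * (2 ^ (m + 10) - 2 ^ ((m + 10) / 2)) :=
        mul_le_mul (f_le_two_pow_sub m) (f_le_two_pow_sub (m + 10)) (Nat.cast_nonneg _)
          ((Nat.cast_nonneg _).trans (f_le_two_pow_sub m))
    _ ≤ (2 ^ (m + 5) - 2 * 2 ^ ((m + 5) / 2)) ^ 2 := two_pow_sub_mul_two_pow_sub_le m
    _ < f (m + 5) ^ 2 := pow_lt_pow_left₀ hlow hbase two_ne_zero
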